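/- Let (X, r) be a non-degenerate involutive set-theoretic solution of the Yang–Baxter equation with |X| = m ≥ 2, and let λ = (λ_1, …, λ_k) ∈ P(n, m) have all positive parts equal, λ_1 = λ_2 = ⋯ = λ_k > 0. If x is a λ-element, then the number of λ-elements contained in the orbit O(x) is exactly k!. -/

import Mathlib

/-! Set-theoretic solutions of the Yang–Baxter equation.
For `r : X × X → X × X` we write `r (i, j) = (σ i j, τ j i)`, i.e. `σ_i(j) = σ i j` and
`τ_j(i) = τ j i`. -/

variable {X : Type*}

/-- The map `r : X × X → X × X` determined by families `σ`, `τ` via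
`r (i, j) = (σ_i(j), τ_j(i))`. -/
def rmapF (σ τ : X → X → X) : X × X → X × X := fun p => (σ p.1 p.2, τ p.2 p.1)

/-- `r × id` on `X × X × X`. -/
def ridF (r : X × X → X × X) : X × X × X → X × X × X :=
  fun p => ((r (p.1, p.2.1)).1, (r (p.1, p.2.1)).2, p.2.2)

/-- `id × r` on `X × X × X`. -/
def idrF (r : X × X → X × X) : X × X × X → X × X × X := fun p => (p.1, r p.2)

/-- The braid (Yang–Baxter) equation `(r × id) ∘ (id × r) ∘ (r × id) = (id × r) ∘ (r × id) ∘ (id × r)`. -/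
def BraidEq (r : X × X → X × X) : Prop :=
  ridF r ∘ idrF r ∘ ridF r = idrF r ∘ ridF r ∘ idrF r

/-- A non-degenerate involutive set-theoretic solution of the Yang–Baxter equation on `X`:
the maps `σ_i` and `τ_i` are bijective (packaged as equivalences), the induced map
`r (i, j) = (σ_i(j), τ_j(i))` satisfies the braid equation, and `r ∘ r = id`
(which in particular makes `r` bijective). -/
structure NDIS (X : Type*) where
  σ : X → X ≃ X
  τ : X → X ≃ X
  braid : BraidEq (rmapF (fun i => ⇑(σ i)) (fun i => ⇑(τ i)))
  invol : ∀ p : X × X,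
    rmapF (fun i => ⇑(σ i)) (fun i => ⇑(τ i))
      (rmapF (fun i => ⇑(σ i)) (fun i => ⇑(τ i)) p) = p

namespace NDIS

/-- The map `r` of the solution. -/
def r (S : NDIS X) : X × X → X × X := rmapF (fun i => ⇑(S.σ i)) (fun i => ⇑(S.τ i))

/-- The diagonal `D : X → X`, `D(i) = τ_i⁻¹(i)`. -/
def D (S : NDIS X) : X → X := fun i => (S.τ i).symm i

end NDIS
namespace NDIS

/-- One elementary move on words: apply `r` to two adjacent letters. -/
def Step (S : NDIS X) (x y : List X) : Prop :=
  ∃ (u v : List X) (i j : X), x = u ++ i :: j :: v ∧ y = u ++ S.σ i j :: S.τ j i :: v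

/-- The orbit `O(x)` of a word `x` under the equivalence relation generated by the
adjacent `r`-moves (equivalently, the orbit of the induced `S_n`-action on `X^n`). -/
def Orb (S : NDIS X) (x : List X) : Set (List X) := {y | Relation.EqvGen S.Step x y}

/-- `Ψ_k(a) = (D^{k−1}(a), …, D(a), a)`. -/
def Psi (S : NDIS X) (k : ℕ) (a : X) : List X :=
  (List.range k).map fun t => S.D^[k - 1 - t] a

/-- The inverse of the diagonal `D`. -/
noncomputable def Dinv (S : NDIS X) [Nonempty X] : X → X := Function.invFun S.D

/-- `Ψ_{−k}(a) = (a, D^{−1}(a), …, D^{−(k−1)}(a))`. -/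
noncomputable def PsiNeg (S : NDIS X) [Nonempty X] (k : ℕ) (a : X) : List X :=
  (List.range k).map fun t => S.Dinv^[t] a

/-- `σ_x = σ_{a_1} ∘ σ_{a_2} ∘ ⋯ ∘ σ_{a_k}` for a word `x = (a_1, …, a_k)`. -/
def sigmaWord (S : NDIS X) (x : List X) (z : X) : X := x.foldr (fun a w => S.σ a w) z

/-- `τ_x = τ_{a_k} ∘ ⋯ ∘ τ_{a_2} ∘ τ_{a_1}` for a word `x = (a_1, …, a_k)`. -/
def tauWord (S : NDIS X) (x : List X) (z : X) : X := x.foldl (fun w a => S.τ a w) z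

/-- The concatenation `Ψ_{L 0}(a 0) Ψ_{L 1}(a 1) ⋯ Ψ_{L (k-1)}(a (k-1))`. -/
def word (S : NDIS X) {k : ℕ} (L : Fin k → ℕ) (a : Fin k → X) : List X :=
  (List.ofFn fun t => S.Psi (L t) (a t)).flatten

/-- The concatenation `Ψ_{L (i+1)}(a (i+1)) ⋯ Ψ_{L (j-1)}(a (j-1))` of the blocks strictly
between positions `i` and `j` (the empty word when `j = i + 1`). -/
def midword (S : NDIS X) {k : ℕ} (L : Fin k → ℕ) (a : Fin k → X) (i j : Fin k) : List X :=
  (((List.ofFn fun t => S.Psi (L t) (a t)).drop ((i : ℕ) + 1)).take ((j : ℕ) - (i : ℕ) - 1)).flatten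

/-- The family `a` yields a `λ`-element: `a_j ≠ D^{−λ_j}(τ_w(a_i))` for all `i < j`, with
`w = Ψ_{λ_{i+1}}(a_{i+1}) ⋯ Ψ_{λ_{j−1}}(a_{j−1})`. -/
def IsLambdaFamily (S : NDIS X) [Nonempty X] {k : ℕ} (L : Fin k → ℕ) (a : Fin k → X) : Prop :=
  ∀ i j : Fin k, i < j →
    a j ≠ S.Dinv^[L j] (S.tauWord (S.midword L a i j) (a i))

/-- `x` is a `λ`-element for the partition with positive parts `L 0 ≥ L 1 ≥ ⋯ ≥ L (k-1) > 0`. -/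
def IsLambdaWord (S : NDIS X) [Nonempty X] {k : ℕ} (L : Fin k → ℕ) (x : List X) : Prop :=
  ∃ a : Fin k → X, x = S.word L a ∧ S.IsLambdaFamily L a

/-- The bijection `b` of `X^n` applying `r` to the entries in (0-based) positions `j` and
`j + 1` and fixing all other entries. -/
def bmap (S : NDIS X) {n : ℕ} (j : ℕ) (hj : j + 1 < n) (x : Fin n → X) : Fin n → X :=
  fun t =>
    if (t : ℕ) = j then S.σ (x ⟨j, by omega⟩) (x ⟨j + 1, hj⟩)
    else if (t : ℕ) = j + 1 then S.τ (x ⟨j + 1, hj⟩) (x ⟨j, by omega⟩)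
    else x t

/-- One elementary move on `X^n` (as functions `Fin n → X`). -/
def StepF (S : NDIS X) {n : ℕ} (x y : Fin n → X) : Prop :=
  ∃ (j : ℕ) (hj : j + 1 < n), y = S.bmap j hj x

end NDIS

/-- The offset `λ_1 + ⋯ + λ_i` of the `i`-th block (0-based). -/
def blockOffset {k : ℕ} (L : Fin k → ℕ) (i : Fin k) : ℕ :=
  ∑ t ∈ Finset.univ.filter (fun t => t < i), L t

/-- A `(λ_1, …, λ_k)`-shuffle: a permutation strictly increasing on each consecutive block. -/
def IsShuffle {k n : ℕ} (L : Fin k → ℕ) (θ : Equiv.Perm (Fin n)) : Prop :=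
  ∀ (i : Fin k) (p q : Fin n), blockOffset L i ≤ (p : ℕ) → p < q →
    (q : ℕ) < blockOffset L i + L i → θ p < θ q

/-!
The Etingof–Schedler–Soloviev map `essMap`, sending `a_1 ⋯ a_n` to the word with letters
`τ_{a_{i+1} ⋯ a_n}(a_i)`, is a bijection of words that turns every `r`-move into a
transposition of adjacent letters; so `y ∈ O(x)` exactly when `essMap y` is a rearrangement of
`essMap x`. When all parts equal `c`, `essMap` sends `Ψ_c(a_1) ⋯ Ψ_c(a_k)` to
`A_1^c ⋯ A_k^c`, where `A_i = τ_w(a_i)` and `w` is the word formed by the later blocks, and the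
condition defining a `λ`-element says precisely that the `A_i` are pairwise distinct. The
`λ`-elements of `O(x)` thus correspond to the rearrangements of `k` distinct letters.
-/

open Function

theorem Relation.eqvGen_iff_of_bijective {α β : Type*} {r : α → α → Prop} {s : β → β → Prop}
    {f : α → β} (hf : Bijective f) (hrs : ∀ x y, r x y ↔ s (f x) (f y)) {x y : α} :
    Relation.EqvGen r x y ↔ Relation.EqvGen s (f x) (f y) := by
  obtain ⟨g, hgf, hfg⟩ := bijective_iff_has_inverse.1 hf
  constructor
  · intro h
    induction h with
    | rel x y h => exact .rel _ _ ((hrs x y).1 h)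
    | refl => exact .refl _
    | symm _ _ _ ih => exact .symm _ _ ih
    | trans _ _ _ _ _ ih₁ ih₂ => exact .trans _ _ _ ih₁ ih₂
  · have key : ∀ u v, Relation.EqvGen s u v → Relation.EqvGen r (g u) (g v) := by
      intro u v h
      induction h with
      | rel u v h => exact .rel _ _ ((hrs _ _).2 (by rwa [hfg u, hfg v]))
      | refl => exact .refl _
      | symm _ _ _ ih => exact .symm _ _ ih
      | trans _ _ _ _ _ ih₁ ih₂ => exact .trans _ _ _ ih₁ ih₂
    simpa only [hgf x, hgf y] using key (f x) (f y)

namespace List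

variable {α : Type*}

def AdjSwap (l l' : List α) : Prop :=
  ∃ u v p q, l = u ++ p :: q :: v ∧ l' = u ++ q :: p :: v

theorem eqvGen_adjSwap_iff_perm {l l' : List α} : Relation.EqvGen AdjSwap l l' ↔ l.Perm l' := by
  constructor
  · intro h
    induction h with
    | rel _ _ h =>
      obtain ⟨u, v, p, q, rfl, rfl⟩ := h
      exact (Perm.swap q p v).append_left u
    | refl => exact .refl _
    | symm _ _ _ ih => exact ih.symm
    | trans _ _ _ _ _ ih₁ ih₂ => exact ih₁.trans ih₂
  · intro h
    induction h with
    | nil => exact .refl _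
    | @cons a l l' _ ih =>
      clear * - ih
      induction ih with
      | rel _ _ h =>
        obtain ⟨u, v, p, q, rfl, rfl⟩ := h
        exact .rel _ _ ⟨a :: u, v, p, q, rfl, rfl⟩
      | refl => exact .refl _
      | symm _ _ _ ih => exact .symm _ _ ih
      | trans _ _ _ _ _ ih₁ ih₂ => exact .trans _ _ _ ih₁ ih₂
    | swap p q l => exact .rel _ _ ⟨[], l, q, p, rfl, rfl⟩
    | trans _ _ ih₁ ih₂ => exact .trans _ _ _ ih₁ ih₂

theorem exists_eq_append_cons_cons {l : List α} {n : ℕ} (h : n + 2 ≤ l.length) :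
    ∃ u i j v, l = u ++ i :: j :: v ∧ u.length = n := by
  refine ⟨l.take n, l[n], l[n + 1], l.drop (n + 2), ?_, by simp; omega⟩
  rw [← drop_eq_getElem_cons, ← drop_eq_getElem_cons, take_append_drop]

theorem drop_succ_eq_take_append_cons (l : List α) {i j : ℕ} (hij : i < j)
    (hj : j < l.length) :
    l.drop (i + 1) = (l.drop (i + 1)).take (j - i - 1) ++ l[j] :: l.drop (j + 1) := by
  conv_lhs => rw [← take_append_drop (j - i - 1) (l.drop (i + 1))]
  rw [drop_drop, show i + 1 + (j - i - 1) = j by omega, drop_eq_getElem_cons hj]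

theorem count_flatMap_replicate [DecidableEq α] (c : ℕ) (l : List α) (z : α) :
    (l.flatMap (replicate c)).count z = c * l.count z := by
  induction l with
  | nil => simp
  | cons b l ih =>
    simp only [flatMap_cons, count_append, ih, count_cons, count_replicate]
    split_ifs <;> ring

theorem perm_flatMap_replicate_iff {c : ℕ} (hc : 0 < c) {l l' : List α} :
    (l.flatMap (replicate c)).Perm (l'.flatMap (replicate c)) ↔ l.Perm l' := by
  classical
  simp only [perm_iff_count, count_flatMap_replicate, Nat.mul_left_cancel_iff hc]

theorem flatMap_replicate_injective {c : ℕ} (hc : 0 < c) :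
    Injective fun l : List α => l.flatMap (replicate c) := by
  intro l l' h
  induction l generalizing l' with
  | nil => cases l' <;> simp_all
  | cons b l ih =>
    cases l' with
    | nil => simp_all
    | cons b' l' =>
      obtain ⟨hb, hl⟩ := append_inj h (by simp)
      obtain ⟨c, rfl⟩ := Nat.exists_eq_add_of_lt hc
      simp only [replicate_succ, cons.injEq] at hb
      rw [hb.1, ih hl]

theorem ncard_setOf_perm {l : List α} (hl : l.Nodup) :
    {l' : List α | l'.Perm l}.ncard = l.length.factorial := by
  classical
  rw [show {l' : List α | l'.Perm l} = ↑l.permutations.toFinset by ext; simp [mem_permutations],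
    Set.ncard_coe_finset, toFinset_card_of_nodup (nodup_permutations _ hl),
    length_permutations]

end List

namespace NDIS

variable (S : NDIS X)

theorem sigma_sigma_tau (i j : X) : S.σ (S.σ i j) (S.τ j i) = i :=
  congrArg Prod.fst (S.invol (i, j))

theorem tau_tau_sigma (i j : X) : S.τ (S.τ j i) (S.σ i j) = j :=
  congrArg Prod.snd (S.invol (i, j))

theorem tau_tau_sigma_tau (a b c : X) :
    S.τ (S.τ c b) (S.τ (S.σ b c) a) = S.τ c (S.τ b a) :=
  (congrArg (fun p : X × X × X => p.2.2) (congrFun S.braid (a, b, c))).symm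

@[simp] theorem tau_D (b : X) : S.τ b (S.D b) = b := by simp [D]

theorem sigma_D (j : X) : S.σ (S.D j) j = S.D j := by
  have h := S.tau_tau_sigma (S.D j) j
  rw [tau_D] at h
  exact (Equiv.eq_symm_apply _).2 h

theorem D_sigma_symm (i : X) : S.D ((S.σ i).symm i) = i := by
  have h := S.sigma_sigma_tau i ((S.σ i).symm i)
  rw [Equiv.apply_symm_apply] at h
  exact (Equiv.symm_apply_eq _).2 ((Equiv.eq_symm_apply _).2 h).symm

theorem D_bijective : Bijective S.D := by
  refine ⟨fun p q hpq => (S.σ (S.D p)).injective ?_, fun i => ⟨_, S.D_sigma_symm i⟩⟩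
  rw [sigma_D, hpq, sigma_D]

theorem eq_Dinv_iterate_iff [Nonempty X] (c : ℕ) (a u : X) :
    a = S.Dinv^[c] u ↔ S.D^[c] a = u := by
  have hinv : RightInverse S.Dinv^[c] S.D^[c] :=
    (rightInverse_invFun S.D_bijective.surjective).iterate c
  constructor
  · rintro rfl
    exact hinv u
  · rintro rfl
    exact (S.D_bijective.injective.iterate c) (hinv _).symm

@[simp] theorem tauWord_cons (a : X) (w : List X) (z : X) :
    S.tauWord (a :: w) z = S.tauWord w (S.τ a z) := rfl

theorem tauWord_append (u v : List X) (z : X) :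
    S.tauWord (u ++ v) z = S.tauWord v (S.tauWord u z) :=
  List.foldl_append

theorem tauWord_bijective (w : List X) : Bijective (S.tauWord w) := by
  induction w with
  | nil => exact bijective_id
  | cons a w ih => exact ih.comp (S.τ a).bijective

noncomputable def tauWordEquiv (w : List X) : X ≃ X := .ofBijective _ (S.tauWord_bijective w)

@[simp] theorem tauWordEquiv_apply (w : List X) (z : X) : S.tauWordEquiv w z = S.tauWord w z :=
  rfl

def essMap : List X → List X
  | [] => []
  | a :: w => S.tauWord w a :: essMap w

@[simp] theorem essMap_nil : S.essMap [] = [] := rfl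

@[simp] theorem essMap_cons (a : X) (w : List X) :
    S.essMap (a :: w) = S.tauWord w a :: S.essMap w := rfl

@[simp] theorem length_essMap (w : List X) : (S.essMap w).length = w.length := by
  induction w <;> simp [*]

theorem essMap_append (u v : List X) :
    S.essMap (u ++ v) = (S.essMap u).map (S.tauWord v) ++ S.essMap v := by
  induction u with
  | nil => simp
  | cons a u ih => simp [ih, tauWord_append]

theorem essMap_bijective : Bijective S.essMap := by
  refine ⟨fun w w' h => ?_, fun w => ?_⟩
  · induction w generalizing w' with
    | nil => cases w' <;> simp_all
    | cons a w ih =>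
      cases w' with
      | nil => simp_all
      | cons a' w' =>
        simp only [essMap_cons, List.cons.injEq] at h
        obtain rfl := ih _ h.2
        rw [(S.tauWord_bijective w).injective h.1]
  · induction w with
    | nil => exact ⟨[], rfl⟩
    | cons p w ih =>
      obtain ⟨v, rfl⟩ := ih
      exact ⟨(S.tauWordEquiv v).symm p :: v, by simp [← tauWordEquiv_apply]⟩

theorem essMap_append_cons_cons (u v : List X) (i j : X) :
    S.essMap (u ++ i :: j :: v) =
      (S.essMap u).map (S.tauWord (i :: j :: v)) ++
        S.tauWord v (S.τ j i) :: S.tauWord v j :: S.essMap v := by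
  simp [essMap_append]

theorem essMap_append_sigma_tau_cons (u v : List X) (i j : X) :
    S.essMap (u ++ S.σ i j :: S.τ j i :: v) =
      (S.essMap u).map (S.tauWord (i :: j :: v)) ++
        S.tauWord v j :: S.tauWord v (S.τ j i) :: S.essMap v := by
  simp [essMap_append, tau_tau_sigma, tau_tau_sigma_tau]

theorem step_iff_adjSwap (x y : List X) :
    S.Step x y ↔ List.AdjSwap (S.essMap x) (S.essMap y) := by
  constructor
  · rintro ⟨u, v, i, j, rfl, rfl⟩
    exact ⟨_, _, _, _, S.essMap_append_cons_cons u v i j,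
      S.essMap_append_sigma_tau_cons u v i j⟩
  · rintro ⟨U, V, p, q, hx, hy⟩
    obtain ⟨u, i, j, v, rfl, hu⟩ : ∃ u i j v, x = u ++ i :: j :: v ∧ u.length = U.length :=
      List.exists_eq_append_cons_cons (by have := congrArg List.length hx; simp at this; omega)
    rw [essMap_append_cons_cons] at hx
    obtain ⟨hU, hpqV⟩ := List.append_inj hx (by simp [hu])
    simp only [List.cons.injEq] at hpqV
    refine ⟨u, v, i, j, rfl, S.essMap_bijective.injective ?_⟩
    rw [hy, essMap_append_sigma_tau_cons, hU, hpqV.1, hpqV.2.1, hpqV.2.2]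

theorem mem_orb_iff {x y : List X} : y ∈ S.Orb x ↔ (S.essMap x).Perm (S.essMap y) :=
  (Relation.eqvGen_iff_of_bijective S.essMap_bijective S.step_iff_adjSwap).trans
    List.eqvGen_adjSwap_iff_perm

theorem Psi_succ (c : ℕ) (a : X) : S.Psi (c + 1) a = S.D^[c] a :: S.Psi c a := by
  simp only [Psi, List.range_succ_eq_map, List.map_cons, List.map_map]
  refine congrArg₂ _ (by simp) (List.map_congr_left fun t _ => ?_)
  simp only [comp_apply]
  congr 1
  omega

theorem tauWord_Psi_D_iterate (c : ℕ) (a : X) : S.tauWord (S.Psi c a) (S.D^[c] a) = a := by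
  induction c with
  | zero => rfl
  | succ c ih => rw [Psi_succ, tauWord_cons, iterate_succ_apply', tau_D, ih]

theorem tauWord_Psi_eq_iff (c : ℕ) (b u : X) : S.tauWord (S.Psi c b) u = b ↔ u = S.D^[c] b := by
  rw [← (S.tauWord_bijective (S.Psi c b)).injective.eq_iff (b := S.D^[c] b),
    tauWord_Psi_D_iterate]

theorem essMap_Psi (c : ℕ) (a : X) : S.essMap (S.Psi c a) = List.replicate c a := by
  induction c with
  | zero => rfl
  | succ c ih => rw [Psi_succ, essMap_cons, tauWord_Psi_D_iterate, ih, List.replicate_succ]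

def blockValues (c : ℕ) : List X → List X
  | [] => []
  | a :: as => S.tauWord (as.flatMap (S.Psi c)) a :: blockValues c as

@[simp] theorem blockValues_cons (c : ℕ) (a : X) (as : List X) :
    S.blockValues c (a :: as) = S.tauWord (as.flatMap (S.Psi c)) a :: S.blockValues c as := rfl

@[simp] theorem length_blockValues (c : ℕ) (as : List X) :
    (S.blockValues c as).length = as.length := by
  induction as <;> simp [blockValues, *]

theorem essMap_flatMap_Psi (c : ℕ) (as : List X) :
    S.essMap (as.flatMap (S.Psi c)) = (S.blockValues c as).flatMap (List.replicate c) := by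
  induction as with
  | nil => rfl
  | cons a as ih => simp [essMap_append, essMap_Psi, ih]

theorem blockValues_surjective (c : ℕ) : Surjective (S.blockValues c) := by
  intro bs
  induction bs with
  | nil => exact ⟨[], rfl⟩
  | cons b bs ih =>
    obtain ⟨as, rfl⟩ := ih
    exact ⟨(S.tauWordEquiv (as.flatMap (S.Psi c))).symm b :: as,
      by simp [← tauWordEquiv_apply]⟩

theorem getElem_blockValues (c : ℕ) (as : List X) (i : ℕ) (hi : i < as.length) :
    (S.blockValues c as)[i]'(by simpa using hi) =
      S.tauWord ((as.drop (i + 1)).flatMap (S.Psi c)) as[i] := by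
  induction as generalizing i with
  | nil => simp at hi
  | cons a as ih =>
    cases i with
    | zero => rfl
    | succ i => simpa using ih i (by simpa using hi)

theorem getElem_blockValues_eq_iff [Nonempty X] (c : ℕ) (as : List X) {i j : ℕ} (hij : i < j)
    (hj : j < as.length) :
    (S.blockValues c as)[i]'(by simp; omega) = (S.blockValues c as)[j]'(by simpa using hj) ↔
      as[j] = S.Dinv^[c] (S.tauWord (((as.drop (i + 1)).take (j - i - 1)).flatMap (S.Psi c))
        (as[i]'(by omega))) := by
  rw [getElem_blockValues _ c as i (by omega), getElem_blockValues _ c as j hj]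
  nth_rw 1 [as.drop_succ_eq_take_append_cons hij hj]
  rw [List.flatMap_append, List.flatMap_cons, tauWord_append, tauWord_append,
    (S.tauWord_bijective _).injective.eq_iff, tauWord_Psi_eq_iff, eq_Dinv_iterate_iff, eq_comm]

section ConstantParts

variable {k c : ℕ} {L : Fin k → ℕ}

theorem word_eq_flatMap (hL : ∀ t, L t = c) (a : Fin k → X) :
    S.word L a = (List.ofFn a).flatMap (S.Psi c) := by
  simp [word, List.flatMap_def, List.map_ofFn, comp_def, hL]

theorem midword_eq_flatMap (hL : ∀ t, L t = c) (a : Fin k → X) (i j : Fin k) :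
    S.midword L a i j =
      (((List.ofFn a).drop (i + 1)).take (j - i - 1)).flatMap (S.Psi c) := by
  simp [midword, List.flatMap_def, List.map_ofFn, comp_def, hL]

theorem isLambdaFamily_iff_nodup [Nonempty X] (hL : ∀ t, L t = c) (a : Fin k → X) :
    S.IsLambdaFamily L a ↔ (S.blockValues c (List.ofFn a)).Nodup := by
  rw [List.Nodup, List.pairwise_iff_getElem]
  simp only [length_blockValues, List.length_ofFn]
  constructor
  · intro h i j hi hj hij heq
    have := (S.getElem_blockValues_eq_iff c _ hij (by simpa using hj)).1 heq
    exact h ⟨i, hi⟩ ⟨j, hj⟩ hij (by simpa [midword_eq_flatMap S hL, hL] using this)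
  · intro h i j hij heq
    refine h i j i.isLt j.isLt hij ((S.getElem_blockValues_eq_iff c _ hij (by simp)).2 ?_)
    simpa [midword_eq_flatMap S hL, hL] using heq

theorem isLambdaWord_iff [Nonempty X] (hL : ∀ t, L t = c) (y : List X) :
    S.IsLambdaWord L y ↔
      ∃ as : List X,
        as.length = k ∧ (S.blockValues c as).Nodup ∧ y = as.flatMap (S.Psi c) := by
  constructor
  · rintro ⟨a, rfl, ha⟩
    exact ⟨List.ofFn a, List.length_ofFn, (S.isLambdaFamily_iff_nodup hL a).1 ha,
      S.word_eq_flatMap hL a⟩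
  · rintro ⟨as, rfl, hnd, rfl⟩
    refine ⟨fun i => as[i], ?_, (S.isLambdaFamily_iff_nodup hL _).2 ?_⟩ <;>
      simp [S.word_eq_flatMap hL, hnd]

theorem image_essMap_lambdaWords_in_orb [Nonempty X] (hc : 0 < c) (hL : ∀ t, L t = c)
    (a : Fin k → X) (ha : S.IsLambdaFamily L a) :
    S.essMap '' {y | y ∈ S.Orb (S.word L a) ∧ S.IsLambdaWord L y} =
      (fun bs : List X => bs.flatMap (List.replicate c)) ''
        {bs : List X | bs.Perm (S.blockValues c (List.ofFn a))} := by
  have hnd := (S.isLambdaFamily_iff_nodup hL a).1 ha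
  ext z
  simp only [Set.mem_image, Set.mem_ofPred_eq, S.isLambdaWord_iff hL, mem_orb_iff,
    S.word_eq_flatMap hL]
  constructor
  · rintro ⟨_, ⟨hperm, as, -, -, rfl⟩, rfl⟩
    rw [essMap_flatMap_Psi, essMap_flatMap_Psi, List.perm_flatMap_replicate_iff hc] at hperm
    exact ⟨S.blockValues c as, hperm.symm, (S.essMap_flatMap_Psi c as).symm⟩
  · rintro ⟨bs, hbs, rfl⟩
    obtain ⟨as, rfl⟩ := S.blockValues_surjective c bs
    refine ⟨as.flatMap (S.Psi c), ⟨?_, as, ?_, hbs.nodup_iff.2 hnd, rfl⟩,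
      S.essMap_flatMap_Psi c as⟩
    · rw [essMap_flatMap_Psi, essMap_flatMap_Psi, List.perm_flatMap_replicate_iff hc]
      exact hbs.symm
    · simpa using hbs.length_eq

end ConstantParts

end NDIS

theorem card_lambda_elements_in_orbit_general {X : Type*} [Nonempty X]
    (S : NDIS X)
    {k : ℕ} (L : Fin k → ℕ) (hpos : ∀ t, 0 < L t)
    (hconst : ∀ s t : Fin k, L s = L t)
    (x : List X) (hx : S.IsLambdaWord L x) :
    {y | y ∈ S.Orb x ∧ S.IsLambdaWord L y}.ncard = Nat.factorial k := by
  obtain ⟨c, hc, hL⟩ : ∃ c, 0 < c ∧ ∀ t, L t = c := by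
    rcases k.eq_zero_or_pos with rfl | hk
    · exact ⟨1, one_pos, fun t => t.elim0⟩
    · exact ⟨L ⟨0, hk⟩, hpos _, fun t => hconst t _⟩
  obtain ⟨a, rfl, ha⟩ := hx
  rw [← Set.ncard_image_of_injective _ S.essMap_bijective.injective,
    S.image_essMap_lambdaWords_in_orb hc hL a ha,
    Set.ncard_image_of_injective _ (List.flatMap_replicate_injective hc),
    List.ncard_setOf_perm ((S.isLambdaFamily_iff_nodup hL a).1 ha), S.length_blockValues,
    List.length_ofFn]

/-- Let `(X, r)` be a non-degenerate involutive solution with `|X| = m ≥ 2`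
and `λ ∈ P(n, m)` with all `k` positive parts equal. If `x` is a `λ`-element, then the
number of `λ`-elements contained in the orbit `O(x)` is exactly `k!`. -/
theorem card_lambda_elements_in_orbit {X : Type*} [Fintype X] [Nonempty X]
    (S : NDIS X) (hm : 2 ≤ Fintype.card X)
    {n k : ℕ} (L : Fin k → ℕ) (hpos : ∀ t, 0 < L t)
    (hconst : ∀ s t : Fin k, L s = L t)
    (hsum : ∑ t, L t = n) (hk : k ≤ Fintype.card X)
    (x : List X) (hx : S.IsLambdaWord L x) :
    {y | y ∈ S.Orb x ∧ S.IsLambdaWord L y}.ncard = Nat.factorial k :=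
  card_lambda_elements_in_orbit_general S L hpos hconst x hx
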